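/- The companion matrix A of the polynomial x^n - x^{n-1} - ... - x - 1 (i.e., the (0,1) companion matrix whose last row is all ones) satisfies exp(A) = n, and it is the unique primitive (0,1) companion matrix of order n with exponent n. -/

import Mathlib

open Matrix BigOperators

/-- A nonnegative square matrix is primitive if some positive power has all entries positive. -/
def IsPrimitive {n : ℕ} (A : Matrix (Fin n) (Fin n) ℝ) : Prop :=
  ∃ m : ℕ, 0 < m ∧ ∀ i j, 0 < (A ^ m) i j

/-- The exponent of a primitive matrix: the least positive `m` with `A ^ m > 0`. -/
noncomputable def matExp {n : ℕ} (A : Matrix (Fin n) (Fin n) ℝ) : ℕ :=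
  sInf {m : ℕ | 0 < m ∧ ∀ i j, 0 < (A ^ m) i j}

/-- `(0,1)` companion matrix: superdiagonal ones on the first `n-1` rows,
arbitrary `(0,1)` last row, all other entries zero. -/
def IsCompanion {n : ℕ} (A : Matrix (Fin n) (Fin n) ℝ) : Prop :=
  (∀ i j, A i j = 0 ∨ A i j = 1) ∧
  (∀ i j : Fin n, (i : ℕ) + 1 < n → (A i j = 1 ↔ (j : ℕ) = (i : ℕ) + 1))

/-- `exp(A:i,j)`: least positive `k` such that `(A^l) i j > 0` for all `l ≥ k`. -/
noncomputable def expIJ {n : ℕ} (A : Matrix (Fin n) (Fin n) ℝ) (i j : Fin n) : ℕ :=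
  sInf {k : ℕ | 0 < k ∧ ∀ l, k ≤ l → 0 < (A ^ l) i j}

/-- `exp(A:i)`: least positive `p` such that every entry of row `i` of `A ^ p` is positive. -/
noncomputable def expRow {n : ℕ} (A : Matrix (Fin n) (Fin n) ℝ) (i : Fin n) : ℕ :=
  sInf {p : ℕ | 0 < p ∧ ∀ j, 0 < (A ^ p) i j}

/-- The digraph of `A` has an elementary cycle of length `k`. -/
def HasElemCycle {n : ℕ} (A : Matrix (Fin n) (Fin n) ℝ) (k : ℕ) : Prop :=
  0 < k ∧ ∃ c : ℕ → Fin n, c k = c 0 ∧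
    (∀ i j, i < k → j < k → c i = c j → i = j) ∧
    ∀ i < k, A (c i) (c (i + 1)) = 1

/-- `m(U)`: the maximal length of a run of consecutive integers contained in `U`. -/
noncomputable def runMax (U : Set ℕ) : ℕ :=
  sSup {k : ℕ | ∃ a : ℕ, ∀ t < k, a + t ∈ U}

/-- The Frobenius number of a set `L`: the least `N` such that every `m ≥ N` is a
nonnegative integer combination of elements of `L`. -/
noncomputable def frobNum (L : Set ℕ) : ℕ :=
  sInf {N : ℕ | ∀ m, N ≤ m → m ∈ AddSubmonoid.closure L}

/-- Irreducibility: for all `i j` there is a walk of some positive length from `i` to `j`. -/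
def IsIrreducibleMat {n : ℕ} (A : Matrix (Fin n) (Fin n) ℝ) : Prop :=
  ∀ i j, ∃ k : ℕ, 0 < k ∧ 0 < (A ^ k) i j

/-!
Index rows from `0`. For a companion matrix `B`, row `i` of `B ^ m` is the unit row `e_{i+m}` as
long as `i + m < n`, so `(B ^ (m + k)) i = (B ^ k) (i + m)`. With `k = 0` this gives
`(B ^ m) 0 0 = 0` for `0 < m < n`, hence `exp(B) ≥ n`; with `i = 0`, `m = n - 1`, `k = 1` it gives
`(B ^ n) 0 = B (n - 1)`, so `B ^ n > 0` forces the last row to be all ones, and the other rows are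
fixed by the companion shape. Conversely, if the last row is all ones then row `n - 1` of every
positive power is positive, and `(B ^ n) i = (B ^ (i + 1)) (n - 1)`.
-/

namespace Matrix

variable {ι R : Type*} [Fintype ι] [DecidableEq ι] [Semiring R] [PartialOrder R]
  [IsStrictOrderedRing R]

lemma pow_apply_pos_of_row_pos {A : Matrix ι ι R} (hA : ∀ i j, 0 ≤ A i j) {r : ι}
    (hr : ∀ j, 0 < A r j) {k : ℕ} (hk : 0 < k) (j : ι) : 0 < (A ^ k) r j := by
  induction k, hk using Nat.le_induction generalizing j with
  | base => simpa using hr j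
  | succ k _ ih =>
    rw [pow_succ', mul_apply]
    calc 0 < A r r * (A ^ k) r j := mul_pos (hr r) (ih j)
      _ ≤ ∑ l, A r l * (A ^ k) l j :=
        Finset.single_le_sum (fun l _ => mul_nonneg (hA r l) (pow_apply_nonneg hA k l j))
          (Finset.mem_univ r)

end Matrix

lemma matExp_eq_of_minimal {n m : ℕ} {A : Matrix (Fin n) (Fin n) ℝ} (hm : 0 < m)
    (hpos : ∀ i j, 0 < (A ^ m) i j) (hmin : ∀ k, 0 < k → (∀ i j, 0 < (A ^ k) i j) → m ≤ k) :
    matExp A = m :=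
  le_antisymm (Nat.sInf_le ⟨hm, hpos⟩) (le_csInf ⟨m, hm, hpos⟩ fun k hk => hmin k hk.1 hk.2)

lemma IsPrimitive.pow_matExp_pos {n : ℕ} {A : Matrix (Fin n) (Fin n) ℝ}
    (hA : _root_.IsPrimitive A) : ∀ i j, 0 < (A ^ matExp A) i j :=
  (Nat.sInf_mem hA).2

namespace IsCompanion

variable {n : ℕ} {A B : Matrix (Fin n) (Fin n) ℝ}

lemma nonneg (hB : IsCompanion B) (i j : Fin n) : 0 ≤ B i j := by
  rcases hB.1 i j with h | h <;> simp [h]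

lemma apply_of_succ_lt (hB : IsCompanion B) {i : Fin n} (h : (i : ℕ) + 1 < n) (l : Fin n) :
    B i l = if l = ⟨i + 1, h⟩ then 1 else 0 := by
  split_ifs with hl
  · exact (hB.2 i l h).mpr (by simp [hl])
  · exact (hB.1 i l).resolve_right fun h1 => hl (Fin.ext ((hB.2 i l h).mp h1))

lemma pow_add_apply (hB : IsCompanion B) {i l : Fin n} {m : ℕ} (hl : (l : ℕ) = i + m) (k : ℕ)
    (j : Fin n) : (B ^ (m + k)) i j = (B ^ k) l j := by
  induction m generalizing i with
  | zero =>
    obtain rfl : l = i := Fin.ext hl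
    rw [zero_add]
  | succ m ih =>
    have hi : (i : ℕ) + 1 < n := by omega
    rw [add_right_comm, pow_succ', mul_apply]
    simp only [hB.apply_of_succ_lt hi, ite_mul, one_mul, zero_mul, Finset.sum_ite_eq',
      Finset.mem_univ, if_true]
    exact ih (by simp only; omega)

lemma le_of_pow_pos (hB : IsCompanion B) {m : ℕ} (hm : 0 < m)
    (hpos : ∀ i j, 0 < (B ^ m) i j) : n ≤ m := by
  by_contra! hmn
  have hn : 0 < n := hm.trans hmn
  have h := hB.pow_add_apply (i := ⟨0, hn⟩) (l := ⟨m, hmn⟩) (m := m) (by simp) 0 ⟨0, hn⟩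
  rw [add_zero, pow_zero, one_apply_ne (by simp [Fin.ext_iff]; omega)] at h
  exact (hpos _ _).ne' h

lemma pow_pos_of_row_eq_one (hB : IsCompanion B) {r : Fin n} (hr : (r : ℕ) = n - 1)
    (hrow : ∀ j, B r j = 1) (i j : Fin n) : 0 < (B ^ n) i j := by
  have h := hB.pow_add_apply (i := i) (m := n - 1 - i) (l := r) (by omega) (i + 1) j
  rw [show n - 1 - i + (i + 1) = n by omega] at h
  rw [h]
  exact Matrix.pow_apply_pos_of_row_pos hB.nonneg (fun j => by rw [hrow]; exact one_pos)
    (Nat.succ_pos _) j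

lemma row_eq_one_of_pow_pos (hB : IsCompanion B) {r : Fin n} (hr : (r : ℕ) = n - 1)
    (hpos : ∀ i j, 0 < (B ^ n) i j) (j : Fin n) : B r j = 1 := by
  have hn : 0 < n := r.pos
  have h := hB.pow_add_apply (i := ⟨0, hn⟩) (l := r) (m := n - 1) (by simpa using hr) 1 j
  rw [Nat.sub_add_cancel hn, pow_one] at h
  have hj := hpos ⟨0, hn⟩ j
  rw [h] at hj
  exact (hB.1 r j).resolve_left hj.ne'

lemma ext_of_row (hA : IsCompanion A) (hB : IsCompanion B) {r : Fin n} (hr : (r : ℕ) = n - 1)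
    (h : ∀ j, A r j = B r j) : A = B := by
  ext i j
  by_cases hi : (i : ℕ) + 1 < n
  · rw [hA.apply_of_succ_lt hi, hB.apply_of_succ_lt hi]
  · rw [show i = r from Fin.ext (by omega)]
    exact h j

end IsCompanion

theorem stmt7 {n : ℕ} (hn : 0 < n) (A : Matrix (Fin n) (Fin n) ℝ)
    (hA : IsCompanion A) (hrow : ∀ j : Fin n, A ⟨n - 1, by omega⟩ j = 1) :
    _root_.IsPrimitive A ∧ matExp A = n ∧
      ∀ B : Matrix (Fin n) (Fin n) ℝ, IsCompanion B → _root_.IsPrimitive B → matExp B = n → B = A := by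
  have hApos := hA.pow_pos_of_row_eq_one rfl hrow
  refine ⟨⟨n, hn, hApos⟩, matExp_eq_of_minimal hn hApos fun k hk => hA.le_of_pow_pos hk, ?_⟩
  intro B hB hBprim hBexp
  have hBpos := hBprim.pow_matExp_pos
  rw [hBexp] at hBpos
  have hBrow : ∀ j, B ⟨n - 1, by omega⟩ j = 1 := hB.row_eq_one_of_pow_pos rfl hBpos
  exact hB.ext_of_row hA (h := fun j => (hBrow j).trans (hrow j).symm) rfl
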